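/- Let G1=(V1,E1,ℓ1), G2=(V2,E2,ℓ2), G3=(V3,E3,ℓ3) be labeled graphs with single-character vertex labels. Then { z | there exists q ∈ ℓ3(MP(G3)) such that q is a subsequence of z, and z ∈ Subseq(G1) ∩ Subseq(G2) } = ⋃ { S_IC(v1,v2,v3) : v1∈V1, v2∈V2, v3∈V3 and v3 has no out-going edges }. Consequently, the SEQ-IC-LCS length of G1, G2, G3 equals the maximum of D(v1,v2,v3) over all v1∈V1, v2∈V2 and all v3∈V3 with no out-going edges. -/

import Mathlib

open List Relation

section Defs

variable {V V1 V2 V3 α : Type*}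

/-- A (directed) path: a nonempty list of vertices, consecutive ones joined by edges. -/
def IsPath (E : V → V → Prop) (p : List V) : Prop :=
  p ≠ [] ∧ p.Chain' E

/-- Paths ending at `v` (the set `P(v)`). -/
def EndsAt (E : V → V → Prop) (v : V) (p : List V) : Prop :=
  IsPath E p ∧ p.getLast? = some v

/-- A path is left-maximal if its first vertex has no in-coming edges. -/
def LeftMax (E : V → V → Prop) (p : List V) : Prop :=
  ∀ w u, p.head? = some w → ¬ E u w

/-- A path is right-maximal if its last vertex has no out-going edges. -/
def RightMax (E : V → V → Prop) (p : List V) : Prop :=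
  ∀ w u, p.getLast? = some w → ¬ E w u

/-- `Subseq(ℓ(P(v)))`: subsequences of label strings of paths ending at `v`. -/
def SubseqAt (E : V → V → Prop) (ℓ : V → α) (v : V) : Set (List α) :=
  {z | ∃ p, EndsAt E v p ∧ z.Sublist (p.map ℓ)}

/-- `Subseq(ℓ(LMP(v)))`: subsequences of label strings of left-maximal paths ending at `v`. -/
def SubseqLM (E : V → V → Prop) (ℓ : V → α) (v : V) : Set (List α) :=
  {z | ∃ p, EndsAt E v p ∧ LeftMax E p ∧ z.Sublist (p.map ℓ)}

/-- `Subseq(G)`: subsequences of label strings of all paths of `G`. -/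
def SubseqG (E : V → V → Prop) (ℓ : V → α) : Set (List α) :=
  {z | ∃ p, IsPath E p ∧ z.Sublist (p.map ℓ)}

/-- A graph is acyclic if no vertex lies on a nonempty cycle. -/
def Acyclic (E : V → V → Prop) : Prop :=
  ∀ v, ¬ Relation.TransGen E v v

/-- The set `S_IC(v1,v2,v3)`. -/
def SIC (E1 : V1 → V1 → Prop) (ℓ1 : V1 → α) (E2 : V2 → V2 → Prop) (ℓ2 : V2 → α)
    (E3 : V3 → V3 → Prop) (ℓ3 : V3 → α) (v1 : V1) (v2 : V2) (v3 : V3) :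
    Set (List α) :=
  {z | (∃ q, EndsAt E3 v3 q ∧ LeftMax E3 q ∧ (q.map ℓ3).Sublist z) ∧
       z ∈ SubseqAt E1 ℓ1 v1 ∧ z ∈ SubseqAt E2 ℓ2 v2}

/-- Maximum length of a string in `S`, with `⊥` (= −∞) for `S = ∅`. -/
noncomputable def maxLen (S : Set (List α)) : WithBot ℕ :=
  sSup ((fun z : List α => (z.length : WithBot ℕ)) '' S)

/-- `L(v1,v2)`: the maximum length of a common subsequence (as a natural number). -/
noncomputable def Lval (E1 : V1 → V1 → Prop) (ℓ1 : V1 → α)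
    (E2 : V2 → V2 → Prop) (ℓ2 : V2 → α) (v1 : V1) (v2 : V2) : ℕ :=
  sSup {n | ∃ z ∈ SubseqAt E1 ℓ1 v1 ∩ SubseqAt E2 ℓ2 v2, n = z.length}

/-- `D(v1,v2,v3)`: the maximum length of a string in `S_IC(v1,v2,v3)`, `−∞` if empty. -/
noncomputable def Dval (E1 : V1 → V1 → Prop) (ℓ1 : V1 → α) (E2 : V2 → V2 → Prop) (ℓ2 : V2 → α)
    (E3 : V3 → V3 → Prop) (ℓ3 : V3 → α) (v1 : V1) (v2 : V2) (v3 : V3) : WithBot ℕ :=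
  maxLen (SIC E1 ℓ1 E2 ℓ2 E3 ℓ3 v1 v2 v3)

end Defs

/-- Supremum of lengths of strings in `S`, valued in `ℕ∞ ∪ {−∞}`;
`⊥` (= −∞) if `S = ∅`. -/
noncomputable def supLen {α : Type*} (S : Set (List α)) : WithBot ℕ∞ :=
  sSup ((fun z : List α => ((z.length : ℕ∞) : WithBot ℕ∞)) '' S)

/-- `D(v1,v2,v3)` as a supremum (possibly infinite, `−∞` if `S_IC` is empty). -/
noncomputable def DvalE {V1 V2 V3 α : Type*}
    (E1 : V1 → V1 → Prop) (ℓ1 : V1 → α) (E2 : V2 → V2 → Prop) (ℓ2 : V2 → α)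
    (E3 : V3 → V3 → Prop) (ℓ3 : V3 → α) (v1 : V1) (v2 : V2) (v3 : V3) :
    WithBot ℕ∞ :=
  supLen (SIC E1 ℓ1 E2 ℓ2 E3 ℓ3 v1 v2 v3)

/-!
Every path ends at its last vertex, so `Subseq(G)` is the union of the sets `Subseq(ℓ(P(v)))`,
and a maximal path of `G3` is exactly a left-maximal path ending at a vertex without out-going
edges. Hence the feasible set splits as the union of the `S_IC(v1,v2,v3)` over such triples, and
the supremum of lengths over a union is the supremum of the suprema.
-/

section Paths

variable {V α : Type*} {E : V → V → Prop}

theorem IsPath.endsAt_getLast {p : List V} (hp : IsPath E p) : EndsAt E (p.getLast hp.1) p :=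
  ⟨hp, List.getLast?_eq_some_getLast hp.1⟩

theorem mem_subseqG_iff {ℓ : V → α} {z : List α} :
    z ∈ SubseqG E ℓ ↔ ∃ v, z ∈ SubseqAt E ℓ v := by
  constructor
  · rintro ⟨p, hp, hz⟩
    exact ⟨_, p, hp.endsAt_getLast, hz⟩
  · rintro ⟨v, p, hp, hz⟩
    exact ⟨p, hp.1, hz⟩

theorem exists_maximal_path_iff (P : List V → Prop) :
    (∃ q, IsPath E q ∧ LeftMax E q ∧ RightMax E q ∧ P q) ↔
      ∃ v, (∀ u, ¬ E v u) ∧ ∃ q, EndsAt E v q ∧ LeftMax E q ∧ P q := by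
  constructor
  · rintro ⟨q, hq, hqL, hqR, hP⟩
    exact ⟨_, fun u => hqR _ u hq.endsAt_getLast.2, q, hq.endsAt_getLast, hqL, hP⟩
  · rintro ⟨v, hsink, q, ⟨hq, hlast⟩, hqL, hP⟩
    refine ⟨q, hq, hqL, fun w u hw => ?_, hP⟩
    obtain rfl : v = w := Option.some_injective _ (hlast.symm.trans hw)
    exact hsink u

end Paths

theorem supLen_iUnion {ι : Sort*} {α : Type*} (S : ι → Set (List α)) :
    supLen (⋃ i, S i) = ⨆ i, supLen (S i) := by
  simp only [supLen, Set.image_iUnion, sSup_iUnion]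

section SeqIC

variable {V1 V2 V3 α : Type*} (E1 : V1 → V1 → Prop) (ℓ1 : V1 → α) (E2 : V2 → V2 → Prop)
  (ℓ2 : V2 → α) (E3 : V3 → V3 → Prop) (ℓ3 : V3 → α)

/-- The set whose supremum length is the SEQ-IC-LCS length of `G1, G2, G3`. -/
def seqICSet : Set (List α) :=
  {z | (∃ q, IsPath E3 q ∧ LeftMax E3 q ∧ RightMax E3 q ∧ (q.map ℓ3).Sublist z) ∧
    z ∈ SubseqG E1 ℓ1 ∧ z ∈ SubseqG E2 ℓ2}

theorem seqICSet_eq_iUnion_SIC :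
    seqICSet E1 ℓ1 E2 ℓ2 E3 ℓ3 = ⋃ v1, ⋃ v2, ⋃ v3 ∈ {v3 : V3 | ∀ u, ¬ E3 v3 u},
      SIC E1 ℓ1 E2 ℓ2 E3 ℓ3 v1 v2 v3 := by
  ext z
  simp only [Set.mem_iUnion, exists_prop]
  constructor
  · rintro ⟨hq, hz1, hz2⟩
    obtain ⟨v3, hsink, hq⟩ := (exists_maximal_path_iff _).1 hq
    obtain ⟨v1, hz1⟩ := mem_subseqG_iff.1 hz1
    obtain ⟨v2, hz2⟩ := mem_subseqG_iff.1 hz2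
    exact ⟨v1, v2, v3, hsink, hq, hz1, hz2⟩
  · rintro ⟨v1, v2, v3, hsink, hq, hz1, hz2⟩
    exact ⟨(exists_maximal_path_iff _).2 ⟨v3, hsink, hq⟩, mem_subseqG_iff.2 ⟨v1, hz1⟩,
      mem_subseqG_iff.2 ⟨v2, hz2⟩⟩

theorem supLen_seqICSet :
    supLen (seqICSet E1 ℓ1 E2 ℓ2 E3 ℓ3) = sSup {d | ∃ v1 v2 v3, (∀ u, ¬ E3 v3 u) ∧
      d = DvalE E1 ℓ1 E2 ℓ2 E3 ℓ3 v1 v2 v3} := by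
  simp only [seqICSet_eq_iUnion_SIC, supLen_iUnion, DvalE, sSup_eq_iSup, Set.mem_ofPred_eq,
    iSup_exists, iSup_and, iSup_comm (ι := WithBot ℕ∞), iSup_iSup_eq_left]

end SeqIC

theorem stmt14 {V1 V2 V3 α : Type*}
    (E1 : V1 → V1 → Prop) (ℓ1 : V1 → α) (E2 : V2 → V2 → Prop) (ℓ2 : V2 → α)
    (E3 : V3 → V3 → Prop) (ℓ3 : V3 → α) :
    ({z | (∃ q, IsPath E3 q ∧ LeftMax E3 q ∧ RightMax E3 q ∧ (q.map ℓ3).Sublist z) ∧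
          z ∈ SubseqG E1 ℓ1 ∧ z ∈ SubseqG E2 ℓ2}
        = ⋃ v1 : V1, ⋃ v2 : V2, ⋃ v3 ∈ {v3 : V3 | ∀ u, ¬ E3 v3 u},
            SIC E1 ℓ1 E2 ℓ2 E3 ℓ3 v1 v2 v3) ∧
    supLen {z | (∃ q, IsPath E3 q ∧ LeftMax E3 q ∧ RightMax E3 q ∧
                  (q.map ℓ3).Sublist z) ∧
            z ∈ SubseqG E1 ℓ1 ∧ z ∈ SubseqG E2 ℓ2}
      = sSup {d | ∃ v1 v2 v3, (∀ u, ¬ E3 v3 u) ∧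
          d = DvalE E1 ℓ1 E2 ℓ2 E3 ℓ3 v1 v2 v3} :=
  ⟨seqICSet_eq_iUnion_SIC E1 ℓ1 E2 ℓ2 E3 ℓ3, supLen_seqICSet E1 ℓ1 E2 ℓ2 E3 ℓ3⟩
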